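/- arXiv:1804.10457 — 2 statements merged into one kernel-verified Lean document; each statement's English description precedes it below -/
import Mathlib

section
/- Let G be a finite group with |G| ≥ 2 and U : G → U(d) a unitary representation on ℂ^d such that every d×d complex matrix commuting with all U_g is a scalar multiple of the identity. Let P be a pure state on ℂ^d such that the map g ↦ U_g P U_g* is injective. Then the pure states (U_g P U_g*)_{g∈G} are antidistinguishable, with antidistinguishing POVM M(g) = (d / (|G|(d−1))) · U_g (I − P) U_g*. -/
open Matrix BigOperators
open scoped ComplexOrder

/-- A pure state on ℂ^d: a rank-one orthogonal projection. -/
def IsPureState {d : ℕ} (P : Matrix (Fin d) (Fin d) ℂ) : Prop :=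
  P.IsHermitian ∧ P * P = P ∧ P.trace = 1

/-!
By Schur's lemma (the hypothesis `hirr`), the twirl `∑ g, U g * X * star (U g)` commutes with the
representation and hence equals `(|G| tr X / d) • 1`. For `X = 1 - P` this says the `M g` sum to
the identity; for `X = P` it gives `∑ h, tr (ρ h * M g) = (|G| / d) tr (M g) = 1`. The zero
`tr (ρ g * M g) = 0` is `P * (1 - P) = 0` conjugated by `U g`. Injectivity of the orbit excludes
`P = 1`, so `d ≥ 2` and the normalising constant is positive.
-/

open scoped MatrixOrder

namespace Matrix

section CommRing

variable {R n G : Type*} [CommRing R] [StarRing R] [Fintype n] [DecidableEq n]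
  [Group G] [Fintype G]

lemma trace_conjStarAlgAut (u : unitaryGroup n R) (X : Matrix n n R) :
    (Unitary.conjStarAlgAut R _ u X).trace = X.trace := by
  rw [Unitary.conjStarAlgAut_apply, trace_mul_cycle, UnitaryGroup.star_mul_self, one_mul]

def twirl (U : G →* unitaryGroup n R) (X : Matrix n n R) : Matrix n n R :=
  ∑ g, Unitary.conjStarAlgAut R _ (U g) X

variable (U : G →* unitaryGroup n R)

lemma conjStarAlgAut_twirl (h : G) (X : Matrix n n R) :
    Unitary.conjStarAlgAut R _ (U h) (twirl U X) = twirl U X := by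
  simp only [twirl, map_sum, ← Unitary.conjStarAlgAut_mul_apply, ← map_mul]
  exact Fintype.sum_equiv (Equiv.mulLeft h) _ _ fun _ => rfl

lemma twirl_mul_comm (X : Matrix n n R) (h : G) :
    twirl U X * U h = U h * twirl U X := by
  conv_lhs => rw [← conjStarAlgAut_twirl U h X]
  rw [Unitary.conjStarAlgAut_apply, mul_assoc, UnitaryGroup.star_mul_self, mul_one]

lemma trace_twirl (X : Matrix n n R) : (twirl U X).trace = Fintype.card G • X.trace := by
  simp only [twirl, trace_sum, trace_conjStarAlgAut, Finset.sum_const, Finset.card_univ]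

end CommRing

lemma twirl_eq_smul_one {𝕜 n G : Type*} [Field 𝕜] [StarRing 𝕜] [Fintype n] [DecidableEq n]
    [Group G] [Fintype G] (U : G →* unitaryGroup n 𝕜)
    (hirr : ∀ A : Matrix n n 𝕜, (∀ g, A * (U g : Matrix n n 𝕜) = U g * A) → ∃ c : 𝕜, A = c • 1)
    (hn : (Fintype.card n : 𝕜) ≠ 0) (X : Matrix n n 𝕜) :
    twirl U X = ((Fintype.card G : 𝕜) * X.trace / Fintype.card n) • 1 := by
  obtain ⟨c, hc⟩ := hirr _ (twirl_mul_comm U X)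
  have htrace := trace_twirl U X
  rw [hc, trace_smul, trace_one, nsmul_eq_mul, smul_eq_mul] at htrace
  rw [hc, (eq_div_iff hn).mpr htrace]

end Matrix

namespace IsPureState

variable {d : ℕ} {P : Matrix (Fin d) (Fin d) ℂ}

lemma isStarProjection (hP : IsPureState P) : IsStarProjection P :=
  ⟨hP.2.1, hP.1⟩

lemma trace_one_sub (hP : IsPureState P) : (1 - P).trace = d - 1 := by
  rw [trace_sub, trace_one, hP.2.2, Fintype.card_fin]

lemma one_sub_posSemidef (hP : IsPureState P) : (1 - P).PosSemidef :=
  hP.isStarProjection.one_sub_nonneg.posSemidef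

lemma two_le_of_ne_one (hP : IsPureState P) (h1 : P ≠ 1) : 2 ≤ d := by
  have hd0 : d ≠ 0 := by
    rintro rfl
    simpa [trace] using hP.2.2
  have hd1 : d ≠ 1 := by
    rintro rfl
    refine h1 (sub_eq_zero.mp (hP.one_sub_posSemidef.trace_eq_zero_iff.mp ?_)).symm
    simpa using hP.trace_one_sub
  omega

end IsPureState

/-- for an irreducible unitary representation of a finite group G
(|G| ≥ 2) and a pure state P with injective orbit map g ↦ U_g P U_g*, the orbit
states are antidistinguished by the covariant POVM
M(g) = (d/(|G|(d−1)))·U_g (I − P) U_g*. -/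
theorem orbit_antidistinguishable {d : ℕ} {G : Type} [Group G] [Fintype G]
    (hG : 2 ≤ Fintype.card G)
    (U : G →* Matrix.unitaryGroup (Fin d) ℂ)
    (hirr : ∀ A : Matrix (Fin d) (Fin d) ℂ,
      (∀ g : G, A * (U g : Matrix (Fin d) (Fin d) ℂ) = (U g : Matrix (Fin d) (Fin d) ℂ) * A) →
      ∃ c : ℂ, A = c • 1)
    (P : Matrix (Fin d) (Fin d) ℂ) (hP : IsPureState P)
    (ρ : G → Matrix (Fin d) (Fin d) ℂ)
    (hρ : ∀ g, ρ g = (U g : Matrix (Fin d) (Fin d) ℂ) * P * star (U g : Matrix (Fin d) (Fin d) ℂ))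
    (hinj : Function.Injective ρ)
    (M : G → Matrix (Fin d) (Fin d) ℂ)
    (hM : ∀ g, M g = ((d : ℂ) / ((Fintype.card G : ℂ) * ((d : ℂ) - 1))) •
      ((U g : Matrix (Fin d) (Fin d) ℂ) * (1 - P) * star (U g : Matrix (Fin d) (Fin d) ℂ))) :
    (∀ g, (M g).PosSemidef) ∧ (∑ g, M g = 1) ∧
      ∀ g, (ρ g * M g).trace = 0 ∧ ∑ h, (ρ h * M g).trace ≠ 0 := by
  -- view `X ↦ U g * X * star (U g)` as a ⋆-algebra automorphism, so products and `1` pass through it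
  simp only [← Unitary.conjStarAlgAut_apply (S := ℂ)] at hρ hM
  have hP1 : P ≠ 1 := by
    rintro rfl
    obtain ⟨a, b, hab⟩ := Fintype.exists_pair_of_one_lt_card (by omega : 1 < Fintype.card G)
    exact hab (hinj (by simp only [hρ, map_one]))
  have hd : 2 ≤ d := hP.two_le_of_ne_one hP1
  have hd1 : (1 : ℂ) ≤ d := by exact_mod_cast (by omega : 1 ≤ d)
  set c : ℂ := (d : ℂ) / ((Fintype.card G : ℂ) * ((d : ℂ) - 1)) with hc
  have hc0 : 0 ≤ c := div_nonneg (by positivity) (mul_nonneg (by positivity) (sub_nonneg.mpr hd1))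
  have hcoeff : c * (Fintype.card G * (d - 1) / d) = 1 := by
    have : (d : ℂ) - 1 ≠ 0 := sub_ne_zero.mpr (by exact_mod_cast (by omega : d ≠ 1))
    rw [hc]
    field_simp
  have htwirl := twirl_eq_smul_one U hirr (by simp only [Fintype.card_fin]; positivity)
  simp only [Fintype.card_fin] at htwirl
  refine ⟨fun g => ?_, ?_, fun g => ⟨?_, ?_⟩⟩
  · rw [hM]
    exact (hP.one_sub_posSemidef.mul_mul_conjTranspose_same _).smul hc0
  · calc ∑ g, M g = c • twirl U (1 - P) := by simp only [hM, twirl, Finset.smul_sum]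
      _ = 1 := by rw [htwirl, hP.trace_one_sub, smul_smul, hcoeff, one_smul]
  · rw [hρ, hM, mul_smul_comm, ← map_mul, hP.isStarProjection.mul_one_sub_self, map_zero, smul_zero,
      trace_zero]
  · calc ∑ h, (ρ h * M g).trace = (twirl U P * M g).trace := by
          simp only [← trace_sum, ← Finset.sum_mul, twirl, hρ]
      _ = 1 := by
          rw [htwirl, hP.2.2, smul_mul, one_mul, trace_smul, hM, trace_smul, trace_conjStarAlgAut,
            hP.trace_one_sub, smul_eq_mul, smul_eq_mul]
          linear_combination hcoeff
      _ ≠ 0 := one_ne_zero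
end

section
/- A family P₁,…,Pₙ of pure states on ℂ^d is antidistinguishable if and only if there exist pure states P_j^k on ℂ^d and real numbers α_j^k with 0 ≤ α_j^k ≤ 1, for j ∈ {1,…,n} and k ∈ {2,…,d}, such that: (1) P_j + ∑_{k=2}^d P_j^k = I for every j; (2) ∑_{j=1}^n ∑_{k=2}^d α_j^k P_j^k = I; and (3) ∑_{i=1}^n ∑_{k=2}^d α_j^k tr(P_i P_j^k) ≠ 0 for every j. -/
open Matrix BigOperators
open scoped ComplexOrder

/-- A state (density matrix) on ℂ^d: positive semidefinite (hence Hermitian) with trace 1. -/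
def IsState {d : ℕ} (ρ : Matrix (Fin d) (Fin d) ℂ) : Prop :=
  ρ.PosSemidef ∧ ρ.trace = 1

/-- A POVM with outcomes 1,…,n. -/
def IsPOVM {d n : ℕ} (M : Fin n → Matrix (Fin d) (Fin d) ℂ) : Prop :=
  (∀ j, (M j).PosSemidef) ∧ ∑ j, M j = 1

/-- States are distinguishable if some POVM identifies each with certainty. -/
def Distinguishable {d n : ℕ} (ρ : Fin n → Matrix (Fin d) (Fin d) ℂ) : Prop :=
  ∃ M : Fin n → Matrix (Fin d) (Fin d) ℂ, IsPOVM M ∧ ∀ j, (ρ j * M j).trace = 1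

/-- States are antidistinguishable if some POVM excludes each with certainty,
with every outcome occurring for at least one state. -/
def Antidistinguishable {d n : ℕ} (ρ : Fin n → Matrix (Fin d) (Fin d) ℂ) : Prop :=
  ∃ M : Fin n → Matrix (Fin d) (Fin d) ℂ, IsPOVM M ∧
    ∀ j, (ρ j * M j).trace = 0 ∧ ∑ k, (ρ k * M j).trace ≠ 0

/-!
Write `A = M - P`, where `M` is the POVM element that excludes the pure state `P`. Since
`tr (P M) = 0` forces `P M = M P = 0`, every eigenvector `u` of `A` either lies in the range of
`P`, with eigenvalue `-1`, or in its kernel, where it is an eigenvector of `M` with eigenvalue in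
`[0, 1]`. Comparing traces shows that exactly one eigenvector is of the first kind, and its
projection is `P`; the other `d - 1` eigenprojections, weighted by their eigenvalues, add up to
`M`. Conversely, the weighted projections `∑ₖ αⱼᵏ Pⱼᵏ` form a POVM, and `Pⱼ + ∑ₖ Pⱼᵏ = 1` makes
each `Pⱼᵏ` orthogonal to `Pⱼ`.
-/

open Finset

namespace Matrix

variable {𝕜 ι : Type*} [RCLike 𝕜] [Fintype ι]

theorem trace_mul_vecMulVec_star (A : Matrix ι ι 𝕜) (v : ι → 𝕜) :
    (A * vecMulVec v (star v)).trace = star v ⬝ᵥ (A *ᵥ v) := by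
  rw [mul_vecMulVec, trace_vecMulVec, dotProduct_comm]

theorem trace_mul_sum_smul {κ : Type*} [Fintype κ] (A : Matrix ι ι 𝕜) (c : κ → 𝕜)
    (B : κ → Matrix ι ι 𝕜) : (A * ∑ k, c k • B k).trace = ∑ k, c k * (A * B k).trace := by
  simp only [mul_sum, trace_sum, mul_smul_comm, trace_smul, smul_eq_mul]

theorem PosSemidef.trace_mul_nonneg {A B : Matrix ι ι 𝕜} (hA : A.PosSemidef)
    (hB : B.PosSemidef) : 0 ≤ (A * B).trace := by
  obtain ⟨m, v, rfl⟩ := posSemidef_iff_eq_sum_vecMulVec.mp hB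
  rw [mul_sum, trace_sum]
  exact sum_nonneg fun k _ => trace_mul_vecMulVec_star A (v k) ▸ hA.dotProduct_mulVec_nonneg _

theorem PosSemidef.mul_eq_zero_of_trace_mul_eq_zero {A B : Matrix ι ι 𝕜} (hA : A.PosSemidef)
    (hB : B.PosSemidef) (h : (A * B).trace = 0) : A * B = 0 := by
  obtain ⟨m, v, rfl⟩ := posSemidef_iff_eq_sum_vecMulVec.mp hB
  simp_rw [mul_sum, trace_sum, trace_mul_vecMulVec_star] at h ⊢
  have hv := (sum_eq_zero_iff_of_nonneg fun k _ => hA.dotProduct_mulVec_nonneg (v k)).mp h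
  refine sum_eq_zero fun k hk => ?_
  rw [mul_vecMulVec, (hA.dotProduct_mulVec_zero_iff _).mp (hv k hk), zero_vecMulVec]

namespace IsHermitian

variable [DecidableEq ι] {A : Matrix ι ι 𝕜} (hA : A.IsHermitian)

theorem star_dotProduct_eigenvectorBasis_self (i : ι) :
    star ⇑(hA.eigenvectorBasis i) ⬝ᵥ ⇑(hA.eigenvectorBasis i) = 1 := by
  rw [dotProduct_comm, ← EuclideanSpace.inner_eq_star_dotProduct,
    inner_self_eq_norm_sq_to_K, hA.eigenvectorBasis.orthonormal.1 i]
  simp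

theorem sum_vecMulVec_eigenvectorBasis :
    ∑ i, vecMulVec ⇑(hA.eigenvectorBasis i) (star ⇑(hA.eigenvectorBasis i)) = 1 := by
  rw [← Unitary.coe_mul_star_self hA.eigenvectorUnitary]
  ext a b
  simp [sum_apply, mul_apply, vecMulVec_apply]

theorem sum_eigenvalues_smul_vecMulVec_eigenvectorBasis :
    ∑ i, hA.eigenvalues i •
      vecMulVec ⇑(hA.eigenvectorBasis i) (star ⇑(hA.eigenvectorBasis i)) = A := by
  conv_rhs => rw [← mul_one A, ← hA.sum_vecMulVec_eigenvectorBasis, mul_sum]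
  simp_rw [mul_vecMulVec, hA.mulVec_eigenvectorBasis, smul_vecMulVec]

end IsHermitian

section OrthogonalPair

variable {P M : Matrix ι ι 𝕜} {v : ι → 𝕜}

theorem mulVec_eq_self_of_sub_mulVec_eq_neg (hM : M.PosSemidef) (hMP : M * P = 0)
    (hv : (M - P) *ᵥ v = -v) : P *ᵥ v = v := by
  have hMw : M *ᵥ (v - P *ᵥ v) = -(v - P *ᵥ v) := calc
    M *ᵥ (v - P *ᵥ v) = M *ᵥ v := by rw [mulVec_sub, mulVec_mulVec, hMP, zero_mulVec, sub_zero]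
    _ = -(v - P *ᵥ v) := by rw [sub_mulVec, sub_eq_iff_eq_add] at hv; rw [hv, neg_sub]; abel
  have hw : star (v - P *ᵥ v) ⬝ᵥ (v - P *ᵥ v) = 0 := by
    have := hM.dotProduct_mulVec_nonneg (v - P *ᵥ v)
    rw [hMw, dotProduct_neg, neg_nonneg] at this
    exact le_antisymm this (dotProduct_star_self_nonneg _)
  exact (sub_eq_zero.mp (dotProduct_star_self_eq_zero.mp hw)).symm

theorem mulVec_eq_zero_of_sub_mulVec_eq_smul (hPP : P * P = P) (hPM : P * M = 0) {μ : ℝ}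
    (hμ : μ ≠ -1) (hv : (M - P) *ᵥ v = μ • v) : P *ᵥ v = 0 := by
  have h : (μ + 1) • (P *ᵥ v) = 0 := by
    have := congrArg (P *ᵥ ·) hv
    simp only [mulVec_mulVec, mul_sub, hPM, hPP, zero_sub, neg_mulVec, mulVec_smul] at this
    rw [add_smul, one_smul, ← this, neg_add_cancel]
  exact (smul_eq_zero.mp h).resolve_left (by contrapose! hμ; linarith)

theorem mem_Icc_of_sub_mulVec_eq_smul [DecidableEq ι] (hM : M.PosSemidef)
    (hM1 : (1 - M).PosSemidef) (hPv : P *ᵥ v = 0) (hv1 : star v ⬝ᵥ v = 1) {μ : ℝ}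
    (hv : (M - P) *ᵥ v = μ • v) : μ ∈ Set.Icc 0 1 := by
  have hMv : star v ⬝ᵥ (M *ᵥ v) = μ := by
    rw [sub_mulVec, hPv, sub_zero] at hv
    rw [hv, dotProduct_smul, hv1, RCLike.real_smul_eq_coe_smul (K := 𝕜), smul_eq_mul, mul_one]
  have h0 := hM.dotProduct_mulVec_nonneg v
  have h1 := hM1.dotProduct_mulVec_nonneg v
  rw [hMv] at h0
  rw [sub_mulVec, one_mulVec, dotProduct_sub, hMv, hv1, sub_nonneg, ← RCLike.ofReal_one,
    RCLike.ofReal_le_ofReal] at h1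
  exact ⟨RCLike.ofReal_nonneg.mp h0, h1⟩

theorem IsHermitian.exists_eigenvalues_eq_neg_one_iff [DecidableEq ι]
    (hA : (M - P).IsHermitian) (hM : M.PosSemidef) (hPP : P * P = P) (hP1 : P.trace = 1)
    (hPM : P * M = 0) (hMP : M * P = 0) :
    ∃ i₀, (∀ i, hA.eigenvalues i = -1 ↔ i = i₀) ∧
      P = vecMulVec ⇑(hA.eigenvectorBasis i₀) (star ⇑(hA.eigenvectorBasis i₀)) := by
  set u := fun i => ⇑(hA.eigenvectorBasis i)
  set μ := hA.eigenvalues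
  set E := fun i => vecMulVec (u i) (star (u i))
  have hu1 : ∀ i, star (u i) ⬝ᵥ u i = 1 := hA.star_dotProduct_eigenvectorBasis_self
  have hAu : ∀ i, (M - P) *ᵥ u i = μ i • u i := hA.mulVec_eigenvectorBasis
  have hPu : ∀ i, P *ᵥ u i = if μ i = -1 then u i else 0 := fun i => by
    split_ifs with h
    · exact mulVec_eq_self_of_sub_mulVec_eq_neg hM hMP (by rw [hAu, h, neg_one_smul])
    · exact mulVec_eq_zero_of_sub_mulVec_eq_smul hPP hPM h (hAu i)
  have hP_eq : P = ∑ i ∈ univ.filter (μ · = -1), E i := calc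
    P = ∑ i, P * E i := by rw [← mul_sum, hA.sum_vecMulVec_eigenvectorBasis, mul_one]
    _ = _ := by
      rw [sum_filter]
      refine sum_congr rfl fun i _ => ?_
      rw [mul_vecMulVec, hPu]
      split_ifs <;> simp [E]
  obtain ⟨i₀, hi₀⟩ : ∃ i₀, univ.filter (μ · = -1) = {i₀} := by
    apply card_eq_one.mp
    have := congrArg trace hP_eq
    simp only [hP1, E, trace_sum, trace_vecMulVec, dotProduct_comm _ (star _), hu1, sum_const,
      nsmul_eq_mul, mul_one] at this
    exact_mod_cast this.symm
  refine ⟨i₀, fun i => ?_, hP_eq.trans (by rw [hi₀, sum_singleton])⟩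
  simpa using Finset.ext_iff.mp hi₀ i

end OrthogonalPair

end Matrix

theorem IsPureState.posSemidef {d : ℕ} {P : Matrix (Fin d) (Fin d) ℂ} (hP : IsPureState P) :
    P.PosSemidef := by
  have := posSemidef_conjTranspose_mul_self P
  rwa [hP.1.eq, hP.2.1] at this

theorem isPureState_vecMulVec_star {d : ℕ} {v : Fin d → ℂ} (hv : star v ⬝ᵥ v = 1) :
    IsPureState (vecMulVec v (star v)) :=
  ⟨(posSemidef_vecMulVec_self_star v).1, by rw [vecMulVec_mul_vecMulVec, hv, one_smul],
    by rw [trace_vecMulVec, dotProduct_comm, hv]⟩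

theorem IsPureState.trace_mul_eq_zero_of_add_sum_eq_one {d : ℕ} {κ : Type*} [Fintype κ]
    {P : Matrix (Fin d) (Fin d) ℂ} {Q : κ → Matrix (Fin d) (Fin d) ℂ} (hP : IsPureState P)
    (hQ : ∀ k, IsPureState (Q k)) (h : P + ∑ k, Q k = 1) (k : κ) : (P * Q k).trace = 0 := by
  have hsum : ∑ k, (P * Q k).trace = 0 := by
    rw [← trace_sum, ← mul_sum, eq_sub_of_add_eq' h, mul_sub, mul_one, hP.2.1, sub_self,
      trace_zero]
  exact (sum_eq_zero_iff_of_nonneg fun k _ => hP.posSemidef.trace_mul_nonneg (hQ k).posSemidef).mp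
    hsum k (mem_univ k)

theorem IsPureState.exists_decomposition {d : ℕ} {P M : Matrix (Fin d) (Fin d) ℂ}
    (hP : IsPureState P) (hM : M.PosSemidef) (hM1 : (1 - M).PosSemidef)
    (hPM : (P * M).trace = 0) :
    ∃ (Q : Fin (d - 1) → Matrix (Fin d) (Fin d) ℂ) (α : Fin (d - 1) → ℝ),
      (∀ k, IsPureState (Q k)) ∧ (∀ k, 0 ≤ α k ∧ α k ≤ 1) ∧
      P + ∑ k, Q k = 1 ∧ ∑ k, (α k : ℂ) • Q k = M := by
  obtain ⟨m, rfl⟩ : ∃ m, d = m + 1 :=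
    Nat.exists_eq_add_one_of_ne_zero (by rintro rfl; simpa using hP.2.2)
  have hPM0 : P * M = 0 := hP.posSemidef.mul_eq_zero_of_trace_mul_eq_zero hM hPM
  have hMP0 : M * P = 0 :=
    hM.mul_eq_zero_of_trace_mul_eq_zero hP.posSemidef (by rwa [trace_mul_comm])
  have hA : (M - P).IsHermitian := hM.1.sub hP.1
  obtain ⟨i₀, hμ, hP_eq⟩ := hA.exists_eigenvalues_eq_neg_one_iff hM hP.2.1 hP.2.2 hPM0 hMP0
  set u := fun i => ⇑(hA.eigenvectorBasis i)
  set μ := hA.eigenvalues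
  set E := fun i => vecMulVec (u i) (star (u i))
  have hAu : ∀ i, (M - P) *ᵥ u i = μ i • u i := hA.mulVec_eigenvectorBasis
  have hPu : ∀ k, P *ᵥ u (i₀.succAbove k) = 0 := fun k =>
    mulVec_eq_zero_of_sub_mulVec_eq_smul hP.2.1 hPM0
      ((hμ _).not.mpr (i₀.succAbove_ne k)) (hAu _)
  refine ⟨fun k => E (i₀.succAbove k), fun k => μ (i₀.succAbove k),
    fun k => isPureState_vecMulVec_star (hA.star_dotProduct_eigenvectorBasis_self _),
    fun k => mem_Icc_of_sub_mulVec_eq_smul hM hM1 (hPu k)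
      (hA.star_dotProduct_eigenvectorBasis_self _) (hAu _), ?_, ?_⟩
  · rw [hP_eq]
    exact (Fin.sum_univ_succAbove E i₀).symm.trans hA.sum_vecMulVec_eigenvectorBasis
  · have h : ∑ i, μ i • E i = M - P := hA.sum_eigenvalues_smul_vecMulVec_eigenvectorBasis
    rw [Fin.sum_univ_succAbove _ i₀] at h
    simp_rw [Complex.coe_smul]
    rw [← sub_add_cancel M P, ← h, (hμ i₀).mpr rfl, hP_eq, neg_one_smul, neg_add_cancel_comm]
    rfl

/-- pure states P₁,…,Pₙ are antidistinguishable iff there exist, for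
each j, d−1 further pure states P_j^k (k ∈ {2,…,d}, here indexed by Fin (d−1)) and
coefficients 0 ≤ α_j^k ≤ 1 such that
(1) P_j + ∑_k P_j^k = I for every j,
(2) ∑_j ∑_k α_j^k P_j^k = I, and
(3) ∑_i ∑_k α_j^k tr(P_i P_j^k) ≠ 0 for every j. -/
theorem antidistinguishable_iff_chart {d n : ℕ}
    (P : Fin n → Matrix (Fin d) (Fin d) ℂ) (hP : ∀ j, IsPureState (P j)) :
    Antidistinguishable P ↔
      ∃ (Q : Fin n → Fin (d - 1) → Matrix (Fin d) (Fin d) ℂ) (α : Fin n → Fin (d - 1) → ℝ),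
        (∀ j k, IsPureState (Q j k)) ∧ (∀ j k, 0 ≤ α j k ∧ α j k ≤ 1) ∧
        (∀ j, P j + ∑ k, Q j k = 1) ∧
        (∑ j, ∑ k, (α j k : ℂ) • Q j k = 1) ∧
        (∀ j, ∑ i, ∑ k, (α j k : ℂ) * (P i * Q j k).trace ≠ 0) := by
  constructor
  · rintro ⟨M, ⟨hM, hM_sum⟩, hPM⟩
    have hM1 : ∀ j, (1 - M j).PosSemidef := fun j => by
      rw [← hM_sum, ← add_sum_erase _ M (mem_univ j), add_sub_cancel_left]
      exact posSemidef_sum _ fun i _ => hM i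
    choose Q α hQ hα hPQ hQM using fun j => (hP j).exists_decomposition (hM j) (hM1 j) (hPM j).1
    refine ⟨Q, α, hQ, hα, hPQ, by simpa only [hQM] using hM_sum, fun j => ?_⟩
    simpa only [← trace_mul_sum_smul, hQM] using (hPM j).2
  · rintro ⟨Q, α, hQ, hα, hPQ, hsum, hne⟩
    refine ⟨fun j => ∑ k, (α j k : ℂ) • Q j k, ⟨fun j => posSemidef_sum _ fun k _ =>
      (hQ j k).posSemidef.smul (Complex.zero_le_real.mpr (hα j k).1), hsum⟩, fun j => ⟨?_, ?_⟩⟩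
    · rw [trace_mul_sum_smul]
      refine sum_eq_zero fun k _ => ?_
      rw [(hP j).trace_mul_eq_zero_of_add_sum_eq_one (hQ j) (hPQ j), mul_zero]
    · simpa only [trace_mul_sum_smul] using hne j
end
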